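/- Let G = (V, E) be a finite simple undirected graph with non-negative edge weights w : E → ℕ, let k be an integer, and let M be a minimum-weight perfect matching of G with w(M) ≤ k and w(M) ≢ k (mod 2). Define w' : E → ℤ by w'(e) = −w(e) − k − 1 for e ∈ M and w'(e) = w(e) + k + 1 for e ∉ M. Then G contains a perfect matching M* with w(M*) ≤ k and w(M*) ≡ k (mod 2) if and only if G contains a cycle C with w'(C) odd and w'(C) ≤ k − w(M). -/

import Mathlib

/-!
For a cycle `C` of `G` put `A = C ∩ M` and `B = C \ M`; `reductionWt M w k` is the weight `w'`
of the statement, so `w'(C) = w(B) - w(A) + (|B| - |A|)(k + 1)`. Since `M` is a matching,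
`|A| ≤ |B|`, with equality exactly when `C` is `M`-alternating, and then `M ∆ C` is a perfect
matching of weight `w(M) + w'(C)`.

If `w'(C) ≤ k - w(M)`, the term `(|B| - |A|)(k + 1)` forces `|A| = |B|`, so `M ∆ C` is a perfect
matching of weight at most `k` whose parity differs from that of `w(M)` when `w'(C)` is odd.

Conversely, if `M*` has weight `≤ k` and parity of `k`, the symmetric difference `M ∆ M*` contains
a cycle `C`, alternating for both matchings. Minimality of `M`, applied to `M ∆ C` and `M* ∆ C`,
gives `0 ≤ w'(C) ≤ w(M*) - w(M)`. If `w'(C)` is even, `M* ∆ C` has the parity of `M*` and is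
closer to `M`, so induction on `|M ∆ M*|` finishes.
-/

variable {V : Type} [Fintype V] [DecidableEq V]

/-- A perfect matching of a graph `G`, viewed as a finite set of edges:
every edge belongs to `G` and every vertex lies in exactly one edge of `M`. -/
def IsPM (G : SimpleGraph V) (M : Finset (Sym2 V)) : Prop :=
  (∀ e ∈ M, e ∈ G.edgeSet) ∧ ∀ v : V, ∃! e, e ∈ M ∧ v ∈ e

/-- The total weight of a set of edges. -/
def wt (w : Sym2 V → ℤ) (X : Finset (Sym2 V)) : ℤ := ∑ e ∈ X, w e

/-- The total weight of (the edge set of) a closed walk. -/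
def cycWt {G : SimpleGraph V} (w : Sym2 V → ℤ) {v : V} (c : G.Walk v v) : ℤ :=
  (c.edges.map w).sum

/-- A cycle `c` is `M`-alternating: its edges alternate (cyclically) between edges in `M`
and edges not in `M`; equivalently, every vertex of the cycle lies in exactly one edge of
the cycle that belongs to `M`. -/
def IsAltCycle (G : SimpleGraph V) (M : Finset (Sym2 V)) {v : V} (c : G.Walk v v) : Prop :=
  c.IsCycle ∧ ∀ u ∈ c.support, ∃! e, e ∈ c.edges ∧ u ∈ e ∧ e ∈ M

open SimpleGraph Finset
open scoped symmDiff

namespace SimpleGraph.Walk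

variable {α : Type} [DecidableEq α] {G : SimpleGraph α} {u v : α}

theorem card_filter_mem_support_toFinset (p : G.Walk u v) {e : Sym2 α} (he : e ∈ p.edges) :
    #(p.support.toFinset.filter (· ∈ e)) = 2 := by
  induction e with
  | _ x y =>
    have : p.support.toFinset.filter (· ∈ s(x, y)) = {x, y} := by
      ext z
      simp only [mem_filter, List.mem_toFinset, Sym2.mem_iff, mem_insert, mem_singleton]
      constructor
      · exact fun h => h.2
      · rintro (rfl | rfl)
        · exact ⟨p.fst_mem_support_of_mem_edges he, .inl rfl⟩
        · exact ⟨p.snd_mem_support_of_mem_edges he, .inr rfl⟩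
    rw [this, card_pair (p.adj_of_mem_edges he).ne]

theorem sum_card_filter_mem_edges (p : G.Walk u v) {T : Finset (Sym2 α)}
    (hT : T ⊆ p.edges.toFinset) :
    ∑ x ∈ p.support.toFinset, #(T.filter (x ∈ ·)) = 2 * #T := by
  refine (sum_card_bipartiteAbove_eq_sum_card_bipartiteBelow (r := fun x e => x ∈ e)).trans ?_
  simp only [bipartiteBelow]
  rw [sum_congr rfl fun e he => p.card_filter_mem_support_toFinset (List.mem_toFinset.mp (hT he)),
    sum_const, smul_eq_mul, mul_comm]

theorem IsCycle.card_filter_mem_edges_toFinset {c : G.Walk u u} (hc : c.IsCycle) {x : α}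
    (hx : x ∈ c.support) : #(c.edges.toFinset.filter (x ∈ ·)) = 2 := by
  rw [← Set.ncard_coe_finset, ← hc.ncard_neighborSet_toSubgraph_eq_two hx]
  have : (↑(c.edges.toFinset.filter (x ∈ ·)) : Set (Sym2 α)) =
      (fun y => s(x, y)) '' c.toSubgraph.neighborSet x := by
    ext e
    simp only [coe_filter, List.mem_toFinset, Set.mem_ofPred_eq, Set.mem_image,
      Subgraph.mem_neighborSet, adj_toSubgraph_iff_mem_edges, Sym2.mem_iff_exists]
    constructor
    · rintro ⟨he, y, rfl⟩
      exact ⟨y, he, rfl⟩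
    · rintro ⟨y, he, rfl⟩
      exact ⟨he, y, rfl⟩
  rw [this, Set.ncard_image_of_injective _ fun _ _ => Sym2.congr_right.mp]

end SimpleGraph.Walk

section Matching

variable {α : Type} [DecidableEq α] {G : SimpleGraph α} {M : Finset (Sym2 α)} {u : α}
  {c : G.Walk u u}

theorem IsPM.card_filter_mem_le_one (hM : IsPM G M) {T : Finset (Sym2 α)} (hT : T ⊆ M)
    (x : α) : #(T.filter (x ∈ ·)) ≤ 1 :=
  card_le_one.mpr fun a ha b hb => by
    simp only [mem_filter] at ha hb
    exact (hM.2 x).unique ⟨hT ha.1, ha.2⟩ ⟨hT hb.1, hb.2⟩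

theorem SimpleGraph.Walk.IsCycle.card_filter_inter_add_card_filter_sdiff (hc : c.IsCycle)
    (M : Finset (Sym2 α)) {x : α} (hx : x ∈ c.support) :
    #((c.edges.toFinset ∩ M).filter (x ∈ ·)) + #((c.edges.toFinset \ M).filter (x ∈ ·)) = 2 := by
  have hsdiff : (c.edges.toFinset \ M).filter (x ∈ ·) = c.edges.toFinset.filter (x ∈ ·) \ M := by
    ext
    simp [and_right_comm]
  rw [← filter_inter, hsdiff, card_inter_add_card_sdiff, hc.card_filter_mem_edges_toFinset hx]

theorem IsPM.card_filter_inter_le_card_filter_sdiff (hM : IsPM G M) (hc : c.IsCycle) {x : α}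
    (hx : x ∈ c.support) :
    #((c.edges.toFinset ∩ M).filter (x ∈ ·)) ≤ #((c.edges.toFinset \ M).filter (x ∈ ·)) := by
  have := hc.card_filter_inter_add_card_filter_sdiff M hx
  have := hM.card_filter_mem_le_one (T := c.edges.toFinset ∩ M) inter_subset_right x
  omega

theorem IsPM.card_inter_le_card_sdiff (hM : IsPM G M) (hc : c.IsCycle) :
    #(c.edges.toFinset ∩ M) ≤ #(c.edges.toFinset \ M) := by
  have := sum_le_sum fun x hx =>
    hM.card_filter_inter_le_card_filter_sdiff hc (List.mem_toFinset.mp hx)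
  rw [c.sum_card_filter_mem_edges inter_subset_left, c.sum_card_filter_mem_edges sdiff_subset]
    at this
  omega

theorem isAltCycle_iff_card_filter_eq_one (hc : c.IsCycle) :
    IsAltCycle G M c ↔ ∀ x ∈ c.support, #((c.edges.toFinset ∩ M).filter (x ∈ ·)) = 1 := by
  simp only [IsAltCycle, hc, true_and, card_eq_one_iff_existsUnique, mem_filter, mem_inter,
    List.mem_toFinset]
  exact forall₂_congr fun x _ => existsUnique_congr fun e => by tauto

theorem IsAltCycle.card_inter_eq_card_sdiff (hc : IsAltCycle G M c) :
    #(c.edges.toFinset ∩ M) = #(c.edges.toFinset \ M) := by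
  have hone := (isAltCycle_iff_card_filter_eq_one hc.1).mp hc
  rw [← Nat.mul_left_cancel_iff two_pos, ← c.sum_card_filter_mem_edges inter_subset_left,
    ← c.sum_card_filter_mem_edges sdiff_subset]
  refine sum_congr rfl fun x hx => ?_
  have := hc.1.card_filter_inter_add_card_filter_sdiff M (List.mem_toFinset.mp hx)
  have := hone x (List.mem_toFinset.mp hx)
  omega

theorem IsPM.isAltCycle_of_card_inter_eq (hM : IsPM G M) (hc : c.IsCycle)
    (h : #(c.edges.toFinset ∩ M) = #(c.edges.toFinset \ M)) : IsAltCycle G M c := by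
  have hle := fun x (hx : x ∈ c.support.toFinset) =>
    hM.card_filter_inter_le_card_filter_sdiff hc (List.mem_toFinset.mp hx)
  have heq := (sum_eq_sum_iff_of_le hle).mp <| by
    rw [c.sum_card_filter_mem_edges inter_subset_left, c.sum_card_filter_mem_edges sdiff_subset, h]
  refine (isAltCycle_iff_card_filter_eq_one hc).mpr fun x hx => ?_
  have := heq x (List.mem_toFinset.mpr hx)
  have := hc.card_filter_inter_add_card_filter_sdiff M hx
  omega

end Matching

section Weights

variable {α : Type} [DecidableEq α] {G : SimpleGraph α} {u : α} {c : G.Walk u u}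

theorem wt_symmDiff (w : Sym2 α → ℤ) (X Y : Finset (Sym2 α)) :
    wt w (X ∆ Y) = wt w X - wt w (Y ∩ X) + wt w (Y \ X) := by
  have := sum_inter_add_sum_sdiff X Y w
  rw [wt, wt, wt, wt, symmDiff_def, sup_eq_union, sum_union disjoint_sdiff_sdiff, inter_comm]
  linarith

theorem SimpleGraph.Walk.IsCycle.cycWt_eq_wt (hc : c.IsCycle) (w : Sym2 α → ℤ) :
    cycWt w c = wt w c.edges.toFinset :=
  (List.sum_toFinset w hc.edges_nodup).symm

def reductionWt (M : Finset (Sym2 α)) (w : Sym2 α → ℤ) (k : ℤ) (e : Sym2 α) : ℤ :=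
  if e ∈ M then -w e - k - 1 else w e + k + 1

theorem wt_reductionWt (M : Finset (Sym2 α)) (w : Sym2 α → ℤ) (k : ℤ) (X : Finset (Sym2 α)) :
    wt (reductionWt M w k) X =
      wt w (X \ M) - wt w (X ∩ M) + (#(X \ M) - #(X ∩ M) : ℤ) * (k + 1) := by
  have hin : ∑ e ∈ X ∩ M, reductionWt M w k e = ∑ e ∈ X ∩ M, (-w e - (k + 1)) :=
    sum_congr rfl fun e he => by simp only [reductionWt, (mem_inter.mp he).2, if_true]; ring
  have hout : ∑ e ∈ X \ M, reductionWt M w k e = ∑ e ∈ X \ M, (w e + (k + 1)) :=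
    sum_congr rfl fun e he => by simp only [reductionWt, (mem_sdiff.mp he).2, if_false]; ring
  rw [wt, ← sum_inter_add_sum_sdiff X M, hin, hout]
  simp only [sum_sub_distrib, sum_add_distrib, sum_neg_distrib, sum_const, nsmul_eq_mul, wt]
  ring

theorem reductionWt_of_mem_symmDiff {M M' : Finset (Sym2 α)} (w : Sym2 α → ℤ) (k : ℤ)
    {e : Sym2 α} (he : e ∈ M ∆ M') : reductionWt M' w k e = -reductionWt M w k e := by
  rcases mem_symmDiff.mp he with ⟨h, h'⟩ | ⟨h, h'⟩ <;> simp [reductionWt, h, h'] <;> ring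

theorem SimpleGraph.Walk.IsCycle.cycWt_reductionWt_symmDiff {M M' : Finset (Sym2 α)}
    {w : Sym2 α → ℤ} {k : ℤ} (hc : c.IsCycle) (hsub : ∀ e ∈ c.edges, e ∈ M ∆ M') :
    cycWt (reductionWt M' w k) c = -cycWt (reductionWt M w k) c := by
  rw [hc.cycWt_eq_wt, hc.cycWt_eq_wt, wt, wt, ← sum_neg_distrib]
  exact sum_congr rfl fun e he => reductionWt_of_mem_symmDiff w k (hsub e (List.mem_toFinset.mp he))

end Weights

section AltCycle

variable {α : Type} [DecidableEq α] {G : SimpleGraph α} {M M' : Finset (Sym2 α)} {u : α}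
  {c : G.Walk u u}

theorem IsAltCycle.isPM_symmDiff (hM : IsPM G M) (hc : IsAltCycle G M c) :
    IsPM G (M ∆ c.edges.toFinset) := by
  refine ⟨fun e he => ?_, fun x => ?_⟩
  · rcases mem_symmDiff.mp he with ⟨h, -⟩ | ⟨h, -⟩
    · exact hM.1 e h
    · exact c.edges_subset_edgeSet (List.mem_toFinset.mp h)
  obtain ⟨m, ⟨hmM, hxm⟩, hm⟩ := hM.2 x
  by_cases hx : x ∈ c.support
  · obtain ⟨a, ⟨haC, hxa, haM⟩, -⟩ := hc.2 x hx
    have hpair := hc.1.card_filter_mem_edges_toFinset hx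
    obtain ⟨b, hb, hba⟩ := exists_mem_ne (by omega : 1 < #(c.edges.toFinset.filter (x ∈ ·))) a
    obtain ⟨hbC, hxb⟩ := mem_filter.mp hb
    have hbM : b ∉ M := fun h => hba ((hm b ⟨h, hxb⟩).trans (hm a ⟨haM, hxa⟩).symm)
    refine ⟨b, ⟨mem_symmDiff.mpr (.inr ⟨hbC, hbM⟩), hxb⟩, ?_⟩
    rintro f ⟨hf, hxf⟩
    rcases mem_symmDiff.mp hf with ⟨hfM, hfC⟩ | ⟨hfC, hfM⟩
    · exact absurd (hm f ⟨hfM, hxf⟩ ▸ hm a ⟨haM, hxa⟩ ▸ List.mem_toFinset.mpr haC) hfC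
    · have hsub : {a, b} ⊆ c.edges.toFinset.filter (x ∈ ·) := by
        simp only [insert_subset_iff, singleton_subset_iff, mem_filter, List.mem_toFinset]
        exact ⟨⟨haC, hxa⟩, List.mem_toFinset.mp hbC, hxb⟩
      have heq := eq_of_subset_of_card_le hsub (by rw [hpair, card_pair hba.symm])
      have : f ∈ ({a, b} : Finset (Sym2 α)) := heq ▸ mem_filter.mpr ⟨hfC, hxf⟩
      rcases mem_insert.mp this with rfl | h
      · exact absurd haM hfM
      · exact mem_singleton.mp h
  · have hmC : m ∉ c.edges.toFinset := fun h =>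
      hx (c.mem_support_of_mem_edges (List.mem_toFinset.mp h) hxm)
    refine ⟨m, ⟨mem_symmDiff.mpr (.inl ⟨hmM, hmC⟩), hxm⟩, ?_⟩
    rintro f ⟨hf, hxf⟩
    rcases mem_symmDiff.mp hf with ⟨hfM, -⟩ | ⟨hfC, -⟩
    · exact hm f ⟨hfM, hxf⟩
    · exact absurd (c.mem_support_of_mem_edges (List.mem_toFinset.mp hfC) hxf) hx

theorem IsAltCycle.wt_symmDiff (hc : IsAltCycle G M c) (w : Sym2 α → ℤ) (k : ℤ) :
    wt w (M ∆ c.edges.toFinset) = wt w M + cycWt (reductionWt M w k) c := by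
  rw [hc.1.cycWt_eq_wt, wt_reductionWt, hc.card_inter_eq_card_sdiff,
    _root_.wt_symmDiff]
  ring

theorem IsPM.isAltCycle_of_edges_subset_symmDiff (hM : IsPM G M) (hM' : IsPM G M')
    (hc : c.IsCycle) (hsub : ∀ e ∈ c.edges, e ∈ M ∆ M') : IsAltCycle G M c := by
  refine ⟨hc, fun x hx => ?_⟩
  obtain ⟨e₁, e₂, hne, hpair⟩ := card_eq_two.mp (hc.card_filter_mem_edges_toFinset hx)
  have hat : ∀ e ∈ ({e₁, e₂} : Finset (Sym2 α)), e ∈ c.edges ∧ x ∈ e := fun e he => by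
    rw [← hpair] at he
    simpa only [mem_filter, List.mem_toFinset] using he
  obtain ⟨e, heC, hxe, heM⟩ : ∃ e, e ∈ c.edges ∧ x ∈ e ∧ e ∈ M := by
    by_contra! h
    have hM'_at : ∀ e ∈ ({e₁, e₂} : Finset (Sym2 α)), e ∈ M' ∧ x ∈ e := fun e he =>
      have ⟨heC, hxe⟩ := hat e he
      ⟨((mem_symmDiff.mp (hsub e heC)).resolve_left fun h' => h e heC hxe h'.1).1, hxe⟩
    exact hne ((hM'.2 x).unique (hM'_at e₁ (by simp)) (hM'_at e₂ (by simp)))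
  exact ⟨e, ⟨heC, hxe, heM⟩, fun f ⟨_, hxf, hfM⟩ => (hM.2 x).unique ⟨hfM, hxf⟩ ⟨heM, hxe⟩⟩

theorem IsPM.isAltCycle_of_cycWt_reductionWt_le (hM : IsPM G M) {w : Sym2 α → ℤ}
    (hw : ∀ e, 0 ≤ w e) {k : ℤ} (hk : wt w M ≤ k) (hc : c.IsCycle)
    (hle : cycWt (reductionWt M w k) c ≤ k - wt w M) : IsAltCycle G M c := by
  refine hM.isAltCycle_of_card_inter_eq hc (by_contra fun hne => ?_)
  have hlt := lt_of_le_of_ne (hM.card_inter_le_card_sdiff hc) hne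
  have hwA : wt w (c.edges.toFinset ∩ M) ≤ wt w M :=
    sum_le_sum_of_subset_of_nonneg inter_subset_right fun e _ _ => hw e
  have hwB : 0 ≤ wt w (c.edges.toFinset \ M) := sum_nonneg fun e _ => hw e
  have hwM : 0 ≤ wt w M := sum_nonneg fun e _ => hw e
  have hgap : k + 1 ≤ (#(c.edges.toFinset \ M) - #(c.edges.toFinset ∩ M) : ℤ) * (k + 1) :=
    le_mul_of_one_le_left (by linarith) (by omega)
  rw [hc.cycWt_eq_wt, wt_reductionWt] at hle
  linarith

end AltCycle

namespace SimpleGraph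

variable {α : Type} [Fintype α] [DecidableEq α] {H : SimpleGraph α}

theorem Walk.IsPath.exists_isCycle_of_forall_adj_exists_ne
    (h : ∀ ⦃a z⦄, H.Adj a z → ∃ z', z' ≠ z ∧ H.Adj a z') {x x₁ y : α} {hadj : H.Adj x x₁}
    {q : H.Walk x₁ y} (hp : (cons hadj q).IsPath) : ∃ (v : α) (c : H.Walk v v), c.IsCycle := by
  obtain ⟨z, hzx₁, hz⟩ := h hadj
  by_cases hmem : z ∈ (cons hadj q).support
  · refine ⟨z, cons hz.symm ((cons hadj q).takeUntil z hmem), ?_⟩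
    refine cons_isCycle_iff _ _ |>.mpr ⟨hp.takeUntil hmem, fun hzx => ?_⟩
    have := (cons hadj q).edges_takeUntil_subset_edges hmem hzx
    rw [edges_cons, List.mem_cons, Sym2.eq_swap, Sym2.congr_right] at this
    rcases this with rfl | hq
    · exact hzx₁ rfl
    · exact (cons_isPath_iff _ _ |>.mp hp).2 (q.fst_mem_support_of_mem_edges hq)
  · have hp' : (cons hz.symm (cons hadj q)).IsPath := hp.cons hmem
    have := hp'.length_lt
    exact hp'.exists_isCycle_of_forall_adj_exists_ne h
termination_by Fintype.card α - q.length
decreasing_by simp only [Walk.length_cons] at *; omega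

theorem exists_isCycle_of_forall_adj_exists_ne
    (h : ∀ ⦃a z⦄, H.Adj a z → ∃ z', z' ≠ z ∧ H.Adj a z') {a b : α} (hab : H.Adj a b) :
    ∃ (v : α) (c : H.Walk v v), c.IsCycle :=
  (Walk.IsPath.of_adj hab).exists_isCycle_of_forall_adj_exists_ne h

end SimpleGraph

section SymmDiff

variable {α : Type} [DecidableEq α] {G : SimpleGraph α} {M M' : Finset (Sym2 α)}

theorem IsPM.exists_mem_sdiff_of_mem_sdiff (hM : IsPM G M) (hM' : IsPM G M') {a z : α}
    (h : s(a, z) ∈ M \ M') : ∃ z', z' ≠ z ∧ s(a, z') ∈ M' \ M := by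
  obtain ⟨hM₀, hM'₀⟩ := mem_sdiff.mp h
  obtain ⟨e, ⟨heM', hae⟩, -⟩ := hM'.2 a
  obtain ⟨z', rfl⟩ := Sym2.mem_iff_exists.mp hae
  have heM : s(a, z') ∉ M := fun h' =>
    hM'₀ ((hM.2 a).unique ⟨h', Sym2.mem_mk_left _ _⟩ ⟨hM₀, Sym2.mem_mk_left _ _⟩ ▸ heM')
  exact ⟨z', by rintro rfl; exact heM hM₀, mem_sdiff.mpr ⟨heM', heM⟩⟩

theorem IsPM.exists_isCycle_edges_subset_symmDiff [Fintype α] (hM : IsPM G M) (hM' : IsPM G M')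
    (hne : M ≠ M') : ∃ (v : α) (c : G.Walk v v), c.IsCycle ∧ ∀ e ∈ c.edges, e ∈ M ∆ M' := by
  set H := fromEdgeSet (↑(M ∆ M') : Set (Sym2 α))
  have hG : ∀ e ∈ M ∆ M', e ∈ G.edgeSet := fun e he => by
    rcases mem_symmDiff.mp he with ⟨h, -⟩ | ⟨h, -⟩
    exacts [hM.1 e h, hM'.1 e h]
  have hHG : H ≤ G := fun a b hab => (fromEdgeSet_adj _).mp hab |>.1 |> hG _
  have hdeg : ∀ ⦃a z⦄, H.Adj a z → ∃ z', z' ≠ z ∧ H.Adj a z' := by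
    intro a z haz
    obtain ⟨z', hz'z, hz'⟩ : ∃ z', z' ≠ z ∧ s(a, z') ∈ M ∆ M' := by
      rcases mem_symmDiff.mp ((fromEdgeSet_adj _).mp haz).1 with h | h
      · obtain ⟨z', hne, hz'⟩ := hM.exists_mem_sdiff_of_mem_sdiff hM' (mem_sdiff.mpr h)
        exact ⟨z', hne, mem_symmDiff.mpr (.inr (mem_sdiff.mp hz'))⟩
      · obtain ⟨z', hne, hz'⟩ := hM'.exists_mem_sdiff_of_mem_sdiff hM (mem_sdiff.mpr h)
        exact ⟨z', hne, mem_symmDiff.mpr (.inl (mem_sdiff.mp hz'))⟩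
    exact ⟨z', hz'z, (fromEdgeSet_adj _).mpr ⟨hz', (G.mem_edgeSet.mp (hG _ hz')).ne⟩⟩
  obtain ⟨e, he⟩ := symmDiff_nonempty.mpr hne
  induction e with
  | _ a b =>
    have hab : H.Adj a b := (fromEdgeSet_adj _).mpr ⟨he, (G.mem_edgeSet.mp (hG _ he)).ne⟩
    obtain ⟨v, c, hc⟩ := exists_isCycle_of_forall_adj_exists_ne hdeg hab
    refine ⟨v, c.mapLe hHG, hc.mapLe hHG, fun e he => ?_⟩
    rw [Walk.edges_mapLe_eq_edges] at he
    have := c.edges_subset_edgeSet he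
    rw [edgeSet_fromEdgeSet] at this
    exact this.1

end SymmDiff

theorem IsPM.exists_odd_cycle_of_not_modEq {α : Type} [Fintype α] [DecidableEq α]
    {G : SimpleGraph α} {M : Finset (Sym2 α)} (hM : IsPM G M) {w : Sym2 α → ℤ} (k : ℤ)
    (hmin : ∀ M', IsPM G M' → wt w M ≤ wt w M') {M' : Finset (Sym2 α)} (hM' : IsPM G M')
    (hpar : ¬ wt w M' ≡ wt w M [ZMOD 2]) :
    ∃ (v : α) (c : G.Walk v v), c.IsCycle ∧ Odd (cycWt (reductionWt M w k) c) ∧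
      cycWt (reductionWt M w k) c ≤ wt w M' - wt w M := by
  induction hn : #(M ∆ M') using Nat.strong_induction_on generalizing M' with
  | _ n ih =>
  obtain ⟨v, c, hc, hsub⟩ := hM.exists_isCycle_edges_subset_symmDiff hM'
    (by rintro rfl; exact hpar rfl)
  set t := cycWt (reductionWt M w k) c
  have hcM := hM.isAltCycle_of_edges_subset_symmDiff hM' hc hsub
  have hcM' := hM'.isAltCycle_of_edges_subset_symmDiff hM hc
    fun e he => symmDiff_comm M M' ▸ hsub e he
  have hwM := hcM.wt_symmDiff w k
  have hwM' : wt w (M' ∆ c.edges.toFinset) = wt w M' - t := by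
    rw [hcM'.wt_symmDiff w k, hc.cycWt_reductionWt_symmDiff hsub]
    ring
  have ht : 0 ≤ t := by linarith [hmin _ (hcM.isPM_symmDiff hM)]
  have htle : t ≤ wt w M' - wt w M := by linarith [hmin _ (hcM'.isPM_symmDiff hM')]
  by_cases hodd : Odd t
  · exact ⟨v, c, hc, hodd, htle⟩
  have hlt : #(M ∆ (M' ∆ c.edges.toFinset)) < n := by
    rw [← symmDiff_assoc, symmDiff_of_ge fun e he => hsub e (List.mem_toFinset.mp he), ← hn]
    exact card_lt_card (sdiff_ssubset (fun e he => hsub e (List.mem_toFinset.mp he))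
      ((List.toFinset_nonempty_iff _).mpr (Walk.edges_eq_nil.not.mpr hc.not_nil)))
  have hpar' : ¬ wt w (M' ∆ c.edges.toFinset) ≡ wt w M [ZMOD 2] := by
    obtain ⟨r, hr⟩ := Int.not_odd_iff_even.mp hodd
    rw [hwM']
    simp only [Int.ModEq] at hpar ⊢
    omega
  obtain ⟨v', c', hc', hodd', hle'⟩ := ih _ hlt (hcM'.isPM_symmDiff hM') hpar' rfl
  exact ⟨v', c', hc', hodd', by linarith⟩

/-- **Correctness of the reduction BCPM ≤ SOC.** Let `M` be a minimum-weight perfect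
matching of `G` (non-negative weights `w : E → ℕ`) with `w(M) ≤ k` and `w(M) ≢ k (mod 2)`,
and define `w'(e) = -w(e) - k - 1` for `e ∈ M` and `w'(e) = w(e) + k + 1` for `e ∉ M`.
Then `G` has a perfect matching `M*` with `w(M*) ≤ k` and `w(M*) ≡ k (mod 2)` if and only
if `G` contains a cycle `C` with `w'(C)` odd and `w'(C) ≤ k - w(M)`. -/
theorem bcpm_iff_short_odd_cycle (G : SimpleGraph V) (w : Sym2 V → ℕ) (k : ℤ)
    (M : Finset (Sym2 V)) (hM : IsPM G M)
    (hmin : ∀ M' : Finset (Sym2 V), IsPM G M' →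
      wt (fun e => (w e : ℤ)) M ≤ wt (fun e => (w e : ℤ)) M')
    (hk : wt (fun e => (w e : ℤ)) M ≤ k)
    (hpar : ¬ wt (fun e => (w e : ℤ)) M ≡ k [ZMOD 2])
    (w' : Sym2 V → ℤ)
    (hw' : ∀ e : Sym2 V,
      w' e = if e ∈ M then -(w e : ℤ) - k - 1 else (w e : ℤ) + k + 1) :
    (∃ Mstar : Finset (Sym2 V), IsPM G Mstar ∧ wt (fun e => (w e : ℤ)) Mstar ≤ k ∧
        wt (fun e => (w e : ℤ)) Mstar ≡ k [ZMOD 2]) ↔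
      (∃ (v : V) (c : G.Walk v v), c.IsCycle ∧ Odd (cycWt w' c) ∧
        cycWt w' c ≤ k - wt (fun e => (w e : ℤ)) M) := by
  obtain rfl : w' = reductionWt M (fun e => (w e : ℤ)) k := funext hw'
  constructor
  · rintro ⟨Ms, hMs, hle, hparMs⟩
    obtain ⟨v, c, hc, hodd, hle'⟩ :=
      hM.exists_odd_cycle_of_not_modEq k hmin hMs fun h => hpar (h.symm.trans hparMs)
    exact ⟨v, c, hc, hodd, by linarith⟩
  · rintro ⟨v, c, hc, hodd, hle⟩
    have halt := hM.isAltCycle_of_cycWt_reductionWt_le (fun e => Int.natCast_nonneg _) hk hc hle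
    have hwt := halt.wt_symmDiff (fun e => (w e : ℤ)) k
    refine ⟨M ∆ c.edges.toFinset, halt.isPM_symmDiff hM, by linarith, ?_⟩
    obtain ⟨r, hr⟩ := hodd
    rw [hwt]
    simp only [Int.ModEq] at hpar ⊢
    omega
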